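/- Quotient rule for the α-derivative: Let f, g be regulated on (a,b), α strictly increasing on (a,b), and x ∈ (a,b) with g^-(x)·g^+(x) ≠ 0. If (D_α f)(x) and (D_α g)(x) exist, then (D_α (f/g))(x) exists and equals (g^-(x)(D_α f)(x) - f^-(x)(D_α g)(x)) / (g^-(x) g^+(x)). -/

import Mathlib

open Filter Topology Function Set MeasureTheory

/-- `x` lies in the interval `(a, b)` with extended-real endpoints. -/
def MemI (a b : EReal) (x : ℝ) : Prop := a < (x : EReal) ∧ (x : EReal) < b

/-- `f` is regulated on `(a, b)`: both one-sided limits exist (as real numbers)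
at every point of `(a, b)`. -/
def RegulatedOn' (f : ℝ → ℝ) (a b : EReal) : Prop :=
  ∀ x : ℝ, MemI a b x →
    (∃ L : ℝ, Tendsto f (𝓝[<] x) (𝓝 L)) ∧ ∃ R : ℝ, Tendsto f (𝓝[>] x) (𝓝 R)

/-- The symmetric `α`-derivative of `f` at `x` equals `A`:
`(D_α f)(x) = lim_{h↓0} (f⁻(x+h) - f⁺(x-h)) / (α⁻(x+h) - α⁺(x-h))`. -/
def HasDerivAlpha (f α : ℝ → ℝ) (x A : ℝ) : Prop :=
  Tendsto (fun h : ℝ =>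
      (leftLim f (x + h) - rightLim f (x - h)) /
        (leftLim α (x + h) - rightLim α (x - h)))
    (𝓝[>] (0 : ℝ)) (𝓝 A)

/-- The filter of real numbers approaching `b : EReal` from the left (`x ↑ b`). -/
noncomputable def leftFilter (b : EReal) : Filter ℝ := comap (fun x : ℝ => (x : EReal)) (𝓝[<] b)

/-- The filter of real numbers approaching `a : EReal` from the right (`x ↓ a`). -/
noncomputable def rightFilter (a : EReal) : Filter ℝ := comap (fun x : ℝ => (x : EReal)) (𝓝[>] a)

/-! By the identity `div_sub_div_div_eq`, the difference quotient of `f / g` is a combination of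
the difference quotients of `f` and `g` with coefficients `f⁺(x - h)`, `g⁺(x - h)` and `g⁻(x + h)`,
which tend to `f⁻(x)`, `g⁻(x)` and `g⁺(x)` as `h ↓ 0`. For the latter, `leftLim f c` is always a
cluster value of `f` at `c` (it falls back to `f c` when there is no left limit), so for `c` just
to the right of `x` it is close to `f⁺(x)`. -/

section LeftRightLim

variable {α β : Type*} [LinearOrder α] [TopologicalSpace α] [OrderTopology α]

theorem tendsto_leftLim_nhdsGT_of_tendsto [TopologicalSpace β] [RegularSpace β]
    {f : α → β} {a : α} {b : β} (h : Tendsto f (𝓝[>] a) (𝓝 b)) :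
    Tendsto f.leftLim (𝓝[>] a) (𝓝 b) := by
  refine (closed_nhds_basis b).tendsto_right_iff.2 fun s ⟨s_mem, s_closed⟩ => ?_
  filter_upwards [eventually_eventually_nhdsWithin.2 (h s_mem), self_mem_nhdsWithin]
    with c hc (hac : a < c)
  refine s_closed.mem_of_mapClusterPt (mapClusterPt_leftLim f c) ?_
  rw [nhdsWithin_eq_nhds.2 (Ioi_mem_nhds hac)] at hc
  exact nhdsWithin_le_nhds hc

theorem tendsto_rightLim_nhdsLT_of_tendsto [TopologicalSpace β] [RegularSpace β]
    {f : α → β} {a : α} {b : β} (h : Tendsto f (𝓝[<] a) (𝓝 b)) :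
    Tendsto f.rightLim (𝓝[<] a) (𝓝 b) :=
  tendsto_leftLim_nhdsGT_of_tendsto (α := αᵒᵈ) h

variable {G₀ : Type*} [GroupWithZero G₀] [TopologicalSpace G₀] [T2Space G₀]
  [ContinuousInv₀ G₀] [ContinuousMul G₀]

theorem leftLim_div {f g : α → G₀} {a : α} [(𝓝[<] a).NeBot]
    (hf : ∃ y, Tendsto f (𝓝[<] a) (𝓝 y)) (hg : ∃ y, Tendsto g (𝓝[<] a) (𝓝 y))
    (h0 : leftLim g a ≠ 0) :
    leftLim (fun t => f t / g t) a = leftLim f a / leftLim g a :=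
  leftLim_eq_of_tendsto ((tendsto_leftLim_of_tendsto hf).div (tendsto_leftLim_of_tendsto hg) h0)

theorem rightLim_div {f g : α → G₀} {a : α} [(𝓝[>] a).NeBot]
    (hf : ∃ y, Tendsto f (𝓝[>] a) (𝓝 y)) (hg : ∃ y, Tendsto g (𝓝[>] a) (𝓝 y))
    (h0 : rightLim g a ≠ 0) :
    rightLim (fun t => f t / g t) a = rightLim f a / rightLim g a :=
  rightLim_eq_of_tendsto
    ((tendsto_rightLim_of_tendsto hf).div (tendsto_rightLim_of_tendsto hg) h0)

end LeftRightLim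

theorem div_sub_div_div_eq {K : Type*} [Field K] {A B C D : K} (E : K) (hC : C ≠ 0) (hD : D ≠ 0) :
    (A / C - B / D) / E = (D * ((A - B) / E) - B * ((C - D) / E)) / (C * D) := by
  rcases eq_or_ne E 0 with rfl | hE
  · simp
  · field_simp
    ring

theorem Filter.Tendsto.div_sub_div_div {ι K : Type*} [Field K] [TopologicalSpace K] [T1Space K]
    [IsTopologicalDivisionRing K] {l : Filter ι} {Fp Fm Gp Gm Δ : ι → K} {fm gp gm Df Dg : K}
    (hDf : Tendsto (fun i => (Fp i - Fm i) / Δ i) l (𝓝 Df))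
    (hDg : Tendsto (fun i => (Gp i - Gm i) / Δ i) l (𝓝 Dg))
    (hFm : Tendsto Fm l (𝓝 fm)) (hGp : Tendsto Gp l (𝓝 gp)) (hGm : Tendsto Gm l (𝓝 gm))
    (hgp : gp ≠ 0) (hgm : gm ≠ 0) :
    Tendsto (fun i => (Fp i / Gp i - Fm i / Gm i) / Δ i) l
      (𝓝 ((gm * Df - fm * Dg) / (gm * gp))) := by
  have hlim := ((hGm.mul hDf).sub (hFm.mul hDg)).div (hGp.mul hGm) (mul_ne_zero hgp hgm)
  rw [mul_comm gp] at hlim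
  refine hlim.congr' ?_
  filter_upwards [hGp.eventually_ne hgp, hGm.eventually_ne hgm] with i hp hm
  exact (div_sub_div_div_eq (Δ i) hp hm).symm

theorem isOpen_setOf_memI (a b : EReal) : IsOpen {x : ℝ | MemI a b x} :=
  continuous_coe_real_ereal.isOpen_preimage (Ioo a b) isOpen_Ioo

theorem tendsto_const_add_nhdsGT (x : ℝ) : Tendsto (fun h : ℝ => x + h) (𝓝[>] 0) (𝓝[>] x) :=
  tendsto_nhdsWithin_iff.2
    ⟨((continuous_const_add x).tendsto' 0 x (add_zero x)).mono_left nhdsWithin_le_nhds,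
      eventually_mem_nhdsWithin.mono fun _ => lt_add_of_pos_right x⟩

theorem tendsto_const_sub_nhdsGT (x : ℝ) : Tendsto (fun h : ℝ => x - h) (𝓝[>] 0) (𝓝[<] x) :=
  tendsto_nhdsWithin_iff.2
    ⟨((continuous_sub_left x).tendsto' 0 x (sub_zero x)).mono_left nhdsWithin_le_nhds,
      eventually_mem_nhdsWithin.mono fun _ => sub_lt_self x⟩

theorem eventually_memI_const_add {a b : EReal} {x : ℝ} (hx : MemI a b x) :
    ∀ᶠ h in 𝓝[>] (0 : ℝ), MemI a b (x + h) :=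
  (tendsto_const_add_nhdsGT x).eventually
    (eventually_nhdsWithin_of_eventually_nhds ((isOpen_setOf_memI a b).mem_nhds hx))

theorem eventually_memI_const_sub {a b : EReal} {x : ℝ} (hx : MemI a b x) :
    ∀ᶠ h in 𝓝[>] (0 : ℝ), MemI a b (x - h) :=
  (tendsto_const_sub_nhdsGT x).eventually
    (eventually_nhdsWithin_of_eventually_nhds ((isOpen_setOf_memI a b).mem_nhds hx))

section LimAtShiftedPoints

variable {β : Type*} [TopologicalSpace β] [RegularSpace β] {f : ℝ → β} {x : ℝ}

theorem tendsto_leftLim_const_add (hf : ∃ y, Tendsto f (𝓝[>] x) (𝓝 y)) :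
    Tendsto (fun h => leftLim f (x + h)) (𝓝[>] 0) (𝓝 (rightLim f x)) :=
  (tendsto_leftLim_nhdsGT_of_tendsto (tendsto_rightLim_of_tendsto hf)).comp
    (tendsto_const_add_nhdsGT x)

theorem tendsto_rightLim_const_sub (hf : ∃ y, Tendsto f (𝓝[<] x) (𝓝 y)) :
    Tendsto (fun h => rightLim f (x - h)) (𝓝[>] 0) (𝓝 (leftLim f x)) :=
  (tendsto_rightLim_nhdsLT_of_tendsto (tendsto_leftLim_of_tendsto hf)).comp
    (tendsto_const_sub_nhdsGT x)

end LimAtShiftedPoints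

namespace RegulatedOn'

variable {f g : ℝ → ℝ} {a b : EReal} {x : ℝ}

theorem eventually_leftLim_div_const_add (hf : RegulatedOn' f a b) (hg : RegulatedOn' g a b)
    (hx : MemI a b x) (hg0 : rightLim g x ≠ 0) :
    ∀ᶠ h in 𝓝[>] (0 : ℝ),
      leftLim (fun t => f t / g t) (x + h) = leftLim f (x + h) / leftLim g (x + h) := by
  filter_upwards [eventually_memI_const_add hx,
    (tendsto_leftLim_const_add (hg x hx).2).eventually_ne hg0] with h hmem hne
  exact leftLim_div (hf _ hmem).1 (hg _ hmem).1 hne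

theorem eventually_rightLim_div_const_sub (hf : RegulatedOn' f a b) (hg : RegulatedOn' g a b)
    (hx : MemI a b x) (hg0 : leftLim g x ≠ 0) :
    ∀ᶠ h in 𝓝[>] (0 : ℝ),
      rightLim (fun t => f t / g t) (x - h) = rightLim f (x - h) / rightLim g (x - h) := by
  filter_upwards [eventually_memI_const_sub hx,
    (tendsto_rightLim_const_sub (hg x hx).1).eventually_ne hg0] with h hmem hne
  exact rightLim_div (hf _ hmem).2 (hg _ hmem).2 hne

end RegulatedOn'

theorem stmt8_general (a b : EReal) (f g α : ℝ → ℝ)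
    (hf : RegulatedOn' f a b) (hg : RegulatedOn' g a b)
    (x Df Dg : ℝ) (hx : MemI a b x)
    (hg0 : leftLim g x * rightLim g x ≠ 0)
    (hDf : HasDerivAlpha f α x Df) (hDg : HasDerivAlpha g α x Dg) :
    HasDerivAlpha (fun t => f t / g t) α x
      ((leftLim g x * Df - leftLim f x * Dg) / (leftLim g x * rightLim g x)) := by
  have hgm : leftLim g x ≠ 0 := left_ne_zero_of_mul hg0
  have hgp : rightLim g x ≠ 0 := right_ne_zero_of_mul hg0
  refine (hDf.div_sub_div_div hDg (tendsto_rightLim_const_sub (hf x hx).1)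
    (tendsto_leftLim_const_add (hg x hx).2) (tendsto_rightLim_const_sub (hg x hx).1)
    hgp hgm).congr' ?_
  filter_upwards [hf.eventually_leftLim_div_const_add hg hx hgp,
    hf.eventually_rightLim_div_const_sub hg hx hgm] with h hl hr
  rw [hl, hr]

/-- Quotient rule for the symmetric `α`-derivative. -/
theorem stmt8 (a b : EReal) (hab : a < b) (f g α : ℝ → ℝ)
    (hf : RegulatedOn' f a b) (hg : RegulatedOn' g a b)
    (hα : StrictMonoOn α {x : ℝ | MemI a b x})
    (x Df Dg : ℝ) (hx : MemI a b x)
    (hg0 : leftLim g x * rightLim g x ≠ 0)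
    (hDf : HasDerivAlpha f α x Df) (hDg : HasDerivAlpha g α x Dg) :
    HasDerivAlpha (fun t => f t / g t) α x
      ((leftLim g x * Df - leftLim f x * Dg) / (leftLim g x * rightLim g x)) :=
  stmt8_general a b f g α hf hg x Df Dg hx hg0 hDf hDg
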